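/- Let (r,v) : I → H² × dS² be a spacelike Legendre curve with spacelike hyperbolic Legendre curvature (ℓ,m), with r(I) ⊂ H²₊, let s₀ ∈ I with m(s₀) ≠ 0, and let Q ∈ H²₊ with Q ≠ r(s₀). Then the pedal curve germ Ped_Q(r) : (I,s₀) → H²₊ is non-singular at s₀ (its derivative at s₀ is nonzero); equivalently, the plane curve germ q∘Ped_Q(r) at s₀ is C^∞ A-equivalent to the germ t ↦ (t,0) at 0. -/

import Mathlib

noncomputable section

/-- The Minkowski pseudo scalar product on `ℝ³₁`. -/
def mdot (u w : Fin 3 → ℝ) : ℝ := -(u 0 * w 0) + u 1 * w 1 + u 2 * w 2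

/-- The Minkowski pseudo vector product on `ℝ³₁`. -/
def mcross (u w : Fin 3 → ℝ) : Fin 3 → ℝ :=
  ![-(u 1 * w 2) + u 2 * w 1, u 2 * w 0 - u 0 * w 2, -(u 1 * w 0) + u 0 * w 1]

/-- Hyperbolic 2-space. -/
def H2 : Set (Fin 3 → ℝ) := {u | mdot u u = -1}

/-- Upper branch of hyperbolic 2-space. -/
def H2plus : Set (Fin 3 → ℝ) := {u | mdot u u = -1 ∧ 0 < u 0}

/-- de Sitter 2-space. -/
def dS2 : Set (Fin 3 → ℝ) := {u | mdot u u = 1}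

/-- A spacelike Legendre curve `(r, v)` on the open interval `I`. -/
def IsSLegendre (I : Set ℝ) (r v : ℝ → Fin 3 → ℝ) : Prop :=
  ContDiffOn ℝ (⊤ : ℕ∞) r I ∧ ContDiffOn ℝ (⊤ : ℕ∞) v I ∧
  (∀ s ∈ I, r s ∈ H2) ∧ (∀ s ∈ I, v s ∈ dS2) ∧
  (∀ s ∈ I, mdot (r s) (v s) = 0) ∧ (∀ s ∈ I, mdot (deriv r s) (v s) = 0)

/-- `μ = r ∧ v`. -/
def muc (r v : ℝ → Fin 3 → ℝ) : ℝ → Fin 3 → ℝ := fun s => mcross (r s) (v s)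

/-- First Legendre curvature `ℓ = ⟨r', μ⟩`. -/
def ellc (r v : ℝ → Fin 3 → ℝ) : ℝ → ℝ := fun s => mdot (deriv r s) (muc r v s)

/-- Second Legendre curvature `m = ⟨v', μ⟩`. -/
def mc (r v : ℝ → Fin 3 → ℝ) : ℝ → ℝ := fun s => mdot (deriv v s) (muc r v s)

/-- Hyperbolic pedal curve relative to `Q` of a frontal with dual curve `v`. -/
def Ped (Q : Fin 3 → ℝ) (v : ℝ → Fin 3 → ℝ) (s : ℝ) : Fin 3 → ℝ :=
  (Real.sqrt (1 + (mdot Q (v s)) ^ 2))⁻¹ • (Q - mdot Q (v s) • v s)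

/-- Hyperbolic orthotomic curve relative to `Q` of a frontal with dual curve `v`. -/
def Ort (Q : Fin 3 → ℝ) (v : ℝ → Fin 3 → ℝ) (s : ℝ) : Fin 3 → ℝ :=
  Q - (2 * mdot Q (v s)) • v s

/-- The standard global chart of `H²₊`. -/
def qchart (x : Fin 3 → ℝ) : ℝ × ℝ := (x 1, x 2)

/-- `f` has an `A_{k-1}`-type singularity at `s₀` (for `k = 0` this means `f s₀ ≠ 0`,
i.e. an `A_{-1}`-type singularity). -/
def AkSingPred (f : ℝ → ℝ) (k : ℕ) (s₀ : ℝ) : Prop :=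
  (∀ i < k, iteratedDeriv i f s₀ = 0) ∧ iteratedDeriv k f s₀ ≠ 0

/-- `ψ` is a germ of a `C^n` diffeomorphism at `x`. -/
def IsLocalCnDiffeoAt (n : ℕ∞) {E F : Type*} [NormedAddCommGroup E] [NormedSpace ℝ E]
    [NormedAddCommGroup F] [NormedSpace ℝ F] (ψ : E → F) (x : E) : Prop :=
  ∃ (U : Set E) (V : Set F) (ψinv : F → E), IsOpen U ∧ x ∈ U ∧ IsOpen V ∧ ψ x ∈ V ∧
    ContDiffOn ℝ n ψ U ∧ ContDiffOn ℝ n ψinv V ∧ Set.MapsTo ψ U V ∧ Set.MapsTo ψinv V U ∧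
    (∀ y ∈ U, ψinv (ψ y) = y) ∧ (∀ z ∈ V, ψ (ψinv z) = z)

/-- The plane curve germ of `f` at `s₀` is `C^n` `𝒜`-equivalent to the germ of `g` at `t₀`. -/
def CnAEquiv (n : ℕ∞) (f : ℝ → ℝ × ℝ) (s₀ : ℝ) (g : ℝ → ℝ × ℝ) (t₀ : ℝ) : Prop :=
  ∃ (φ : ℝ → ℝ) (Ψ : ℝ × ℝ → ℝ × ℝ),
    IsLocalCnDiffeoAt n φ s₀ ∧ φ s₀ = t₀ ∧
    IsLocalCnDiffeoAt n Ψ (f s₀) ∧ Ψ (f s₀) = g t₀ ∧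
    ∀ᶠ s in nhds s₀, g (φ s) = Ψ (f s)

/-- The plane curve germ of `f` at `s₀` is `C^n` `ℒ`-equivalent to the germ of `g` at `s₀`. -/
def CnLEquiv (n : ℕ∞) (f : ℝ → ℝ × ℝ) (s₀ : ℝ) (g : ℝ → ℝ × ℝ) : Prop :=
  ∃ Ψ : ℝ × ℝ → ℝ × ℝ,
    IsLocalCnDiffeoAt n Ψ (f s₀) ∧ Ψ (f s₀) = g s₀ ∧
    ∀ᶠ s in nhds s₀, g s = Ψ (f s)

end

lemma mdot_comm (u w : Fin 3 → ℝ) : mdot u w = mdot w u := by unfold mdot; ring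
lemma mcross_apply0 (u w : Fin 3 → ℝ) : mcross u w 0 = -(u 1 * w 2) + u 2 * w 1 := rfl
lemma mcross_apply1 (u w : Fin 3 → ℝ) : mcross u w 1 = u 2 * w 0 - u 0 * w 2 := rfl
lemma mcross_apply2 (u w : Fin 3 → ℝ) : mcross u w 2 = -(u 1 * w 0) + u 0 * w 1 := rfl
lemma mdot_mcross_self (R V : Fin 3 → ℝ) :
    mdot (mcross R V) (mcross R V) = mdot R V * mdot R V - mdot R R * mdot V V := by
  unfold mdot; rw [mcross_apply0, mcross_apply1, mcross_apply2]; ring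
lemma mdot_mcross_left (R V : Fin 3 → ℝ) : mdot R (mcross R V) = 0 := by
  unfold mdot; rw [mcross_apply0, mcross_apply1, mcross_apply2]; ring
lemma mdot_mcross_right (R V : Fin 3 → ℝ) : mdot V (mcross R V) = 0 := by
  unfold mdot; rw [mcross_apply0, mcross_apply1, mcross_apply2]; ring
lemma mdot_add_left (u w z : Fin 3 → ℝ) : mdot (u + w) z = mdot u z + mdot w z := by
  unfold mdot; simp only [Pi.add_apply]; ring
lemma mdot_sub_left (u w z : Fin 3 → ℝ) : mdot (u - w) z = mdot u z - mdot w z := by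
  unfold mdot; simp only [Pi.sub_apply]; ring
lemma mdot_neg_left (u w : Fin 3 → ℝ) : mdot (-u) w = -mdot u w := by
  unfold mdot; simp only [Pi.neg_apply]; ring
lemma mdot_smul_left (a : ℝ) (u w : Fin 3 → ℝ) : mdot (a • u) w = a * mdot u w := by
  unfold mdot; simp only [Pi.smul_apply, smul_eq_mul]; ring
lemma mdot_zero_left (w : Fin 3 → ℝ) : mdot 0 w = 0 := by
  unfold mdot; simp
lemma mdot_add_right (u w z : Fin 3 → ℝ) : mdot z (u + w) = mdot z u + mdot z w := by
  unfold mdot; simp only [Pi.add_apply]; ring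
lemma mdot_sub_right (u w z : Fin 3 → ℝ) : mdot z (u - w) = mdot z u - mdot z w := by
  unfold mdot; simp only [Pi.sub_apply]; ring
lemma mdot_neg_right (u w : Fin 3 → ℝ) : mdot u (-w) = -mdot u w := by
  unfold mdot; simp only [Pi.neg_apply]; ring
lemma mdot_smul_right (a : ℝ) (u w : Fin 3 → ℝ) : mdot u (a • w) = a * mdot u w := by
  unfold mdot; simp only [Pi.smul_apply, smul_eq_mul]; ring

lemma mexpand (R V w : Fin 3 → ℝ) (h1 : mdot R R = -1) (h2 : mdot V V = 1)
    (h3 : mdot R V = 0) :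
    w = (-(mdot w R)) • R + (mdot w V) • V + (mdot w (mcross R V)) • (mcross R V) := by
  have e0 : w 0 = (-(mdot w R)) * R 0 + (mdot w V) * V 0 + (mdot w (mcross R V)) * (mcross R V 0) := by
    unfold mdot at h1 h2 h3 ⊢
    rw [mcross_apply0, mcross_apply1, mcross_apply2]
    linear_combination (-(V 0 * V 1 * w 1) - V 0 * V 2 * w 2 + V 1^2 * w 0 + V 2^2 * w 0) * h1 +
      (R 0^2 * w 0 - R 0 * R 1 * w 1 - R 0 * R 2 * w 2 - w 0) * h2 +
      (-(R 0 * V 0 * w 0) + R 0 * V 1 * w 1 + R 0 * V 2 * w 2 + R 1 * V 0 * w 1 - R 1 * V 1 * w 0 + R 2 * V 0 * w 2 - R 2 * V 2 * w 0) * h3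
  have e1 : w 1 = (-(mdot w R)) * R 1 + (mdot w V) * V 1 + (mdot w (mcross R V)) * (mcross R V 1) := by
    unfold mdot at h1 h2 h3 ⊢
    rw [mcross_apply0, mcross_apply1, mcross_apply2]
    linear_combination (V 0 * V 1 * w 0 - V 1^2 * w 1 - V 1 * V 2 * w 2 + w 1) * h1 +
      (-(R 0^2 * w 1) + R 0 * R 1 * w 0 - R 1 * R 2 * w 2 + R 2^2 * w 1) * h2 +
      (R 0 * V 0 * w 1 - R 0 * V 1 * w 0 - R 1 * V 0 * w 0 + R 1 * V 1 * w 1 + R 1 * V 2 * w 2 + R 2 * V 1 * w 2 - R 2 * V 2 * w 1) * h3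
  have e2 : w 2 = (-(mdot w R)) * R 2 + (mdot w V) * V 2 + (mdot w (mcross R V)) * (mcross R V 2) := by
    unfold mdot at h1 h2 h3 ⊢
    rw [mcross_apply0, mcross_apply1, mcross_apply2]
    linear_combination (V 0 * V 2 * w 0 - V 1 * V 2 * w 1 - V 2^2 * w 2 + w 2) * h1 +
      (-(R 0^2 * w 2) + R 0 * R 2 * w 0 + R 1^2 * w 2 - R 1 * R 2 * w 1) * h2 +
      (R 0 * V 0 * w 2 - R 0 * V 2 * w 0 - R 1 * V 1 * w 2 + R 1 * V 2 * w 1 - R 2 * V 0 * w 0 + R 2 * V 1 * w 1 + R 2 * V 2 * w 2) * h3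
  funext i
  simp only [Pi.add_apply, Pi.smul_apply, smul_eq_mul]
  fin_cases i
  · exact e0
  · exact e1
  · exact e2
lemma mdot_expand (u w : Fin 3 → ℝ) : mdot u w = -(u 0 * w 0) + u 1 * w 1 + u 2 * w 2 := rfl
lemma aux_main (R V V' Q P' : Fin 3 → ℝ)
    (hrr : mdot R R = -1) (hvv : mdot V V = 1) (hrv0 : mdot R V = 0)
    (hv'v : mdot V' V = 0) (hrv' : mdot R V' = 0)
    (hm' : mdot V' (mcross R V) ≠ 0)
    (hQQ : mdot Q Q = -1) (hQ0 : 0 < Q 0) (hR0 : 0 < R 0) (hQne : Q ≠ R)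
    (hP' : P' = (-(mdot Q V * mdot Q V') / (Real.sqrt (1 + mdot Q V ^ 2)) ^ 3) • (Q - mdot Q V • V)
      + (Real.sqrt (1 + mdot Q V ^ 2))⁻¹ • -(mdot Q V' • V + mdot Q V • V')) :
    P' ≠ 0 ∧ (P' 1, P' 2) ≠ (0 : ℝ × ℝ) := by
  have hpos : (0:ℝ) < 1 + mdot Q V ^ 2 := by positivity
  have hSpos : 0 < Real.sqrt (1 + mdot Q V ^ 2) := Real.sqrt_pos.2 hpos
  set S : ℝ := Real.sqrt (1 + mdot Q V ^ 2) with hSdef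
  have hS2 : S ^ 2 = 1 + mdot Q V ^ 2 := by
    rw [hSdef]; exact Real.sq_sqrt hpos.le
  have hSne : S ≠ 0 := ne_of_gt hSpos
  have hvv' : mdot V V' = 0 := by rw [mdot_comm]; exact hv'v
  have hcomm1 : mdot V Q = mdot Q V := mdot_comm _ _
  have hcomm2 : mdot V' Q = mdot Q V' := mdot_comm _ _
  have hexp : V' = mdot V' (mcross R V) • mcross R V := by
    have h := mexpand R V V' hrr hvv hrv0
    have h1 : mdot V' R = 0 := by rw [mdot_comm]; exact hrv'
    rw [h1, hv'v] at h
    simpa using h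
  have hlbm : mdot Q V' = mdot V' (mcross R V) * mdot Q (mcross R V) := by
    conv_lhs => rw [hexp]
    rw [mdot_smul_right]
  have hP'ne : P' ≠ 0 := by
    intro h0
    have eV : mdot P' V = -(S⁻¹ * mdot Q V') := by
      rw [hP']
      simp only [mdot_add_left, mdot_sub_left, mdot_smul_left, mdot_neg_left]
      rw [hvv, hv'v]
      ring
    rw [h0, mdot_zero_left] at eV
    have hlb0 : mdot Q V' = 0 := by
      have h2 : S⁻¹ * mdot Q V' = 0 := by linarith
      rcases mul_eq_zero.1 h2 with h | h
      · exact absurd h (inv_ne_zero hSne)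
      · exact h
    have eU : mdot P' (mcross R V) = -(S⁻¹ * (mdot Q V * mdot V' (mcross R V))) := by
      rw [hP']
      simp only [mdot_add_left, mdot_sub_left, mdot_smul_left, mdot_neg_left]
      rw [mdot_mcross_right, hlb0]
      ring
    rw [h0, mdot_zero_left] at eU
    have hla0 : mdot Q V = 0 := by
      have h3 : S⁻¹ * (mdot Q V * mdot V' (mcross R V)) = 0 := by linarith
      rcases mul_eq_zero.1 h3 with h | h
      · exact absurd h (inv_ne_zero hSne)
      · rcases mul_eq_zero.1 h with h' | h'
        · exact h'
        · exact absurd h' hm'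
    have hQU0 : mdot Q (mcross R V) = 0 := by
      have h4 : mdot V' (mcross R V) * mdot Q (mcross R V) = 0 := by rw [← hlbm]; exact hlb0
      rcases mul_eq_zero.1 h4 with h | h
      · exact absurd h hm'
      · exact h
    have hQexp := mexpand R V Q hrr hvv hrv0
    rw [hla0, hQU0] at hQexp
    simp only [zero_smul, add_zero] at hQexp
    -- hQexp : Q = (-(mdot Q R)) • R  (possibly normalized)
    have hQ0R : Q 0 = -(mdot Q R * R 0) := by
      have := congrFun hQexp 0
      simpa using this
    have hc2 : mdot Q R * mdot Q R = 1 := by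
      have h5 : mdot Q Q = mdot Q R * (mdot Q R * mdot R R) := by
        conv_lhs => rw [hQexp]
        rw [mdot_smul_left, mdot_smul_right]
        ring
      rw [hQQ, hrr] at h5
      linear_combination h5
    have h7 : mdot Q R < 0 := by nlinarith
    have h8 : (mdot Q R - 1) * (mdot Q R + 1) = 0 := by linear_combination hc2
    have hcneg : mdot Q R = -1 := by
      rcases mul_eq_zero.1 h8 with h | h
      · linarith
      · linarith
    apply hQne
    rw [hQexp, hcneg]
    funext i
    simp
  refine ⟨hP'ne, ?_⟩
  intro h0
  have h1 : P' 1 = 0 := (Prod.ext_iff.1 h0).1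
  have h2 : P' 2 = 0 := (Prod.ext_iff.1 h0).2
  have e3 : mdot P' (Q - mdot Q V • V) = 0 := by
    rw [hP']
    simp only [mdot_add_left, mdot_sub_left, mdot_smul_left, mdot_neg_left,
      mdot_sub_right, mdot_smul_right, mdot_add_right]
    rw [hcomm1, hcomm2, hQQ, hvv, hv'v]
    field_simp
    linear_combination (-(mdot Q V * mdot Q V')) * hS2
  have e4 : mdot (S⁻¹ • (Q - mdot Q V • V)) (S⁻¹ • (Q - mdot Q V • V)) = -1 := by
    simp only [mdot_smul_left, mdot_smul_right, mdot_sub_left, mdot_sub_right,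
      mdot_smul_left, mdot_smul_right]
    rw [hcomm1, hQQ, hvv]
    field_simp
    linear_combination hS2
  have e3' : P' 0 * (Q 0 - mdot Q V * V 0) = 0 := by
    have hh := e3
    rw [mdot_expand] at hh
    simp only [Pi.sub_apply, Pi.smul_apply, smul_eq_mul] at hh
    rw [h1, h2] at hh
    linarith
  have e4' := e4
  rw [mdot_expand] at e4'
  simp only [Pi.sub_apply, Pi.smul_apply, smul_eq_mul] at e4'
  rcases mul_eq_zero.1 e3' with hP0 | hN00
  · apply hP'ne
    funext i
    fin_cases i
    · simpa using hP0
    · simpa using h1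
    · simpa using h2
  · rw [hN00] at e4'
    nlinarith [mul_self_nonneg (S⁻¹ * (Q 1 - mdot Q V * V 1)),
      mul_self_nonneg (S⁻¹ * (Q 2 - mdot Q V * V 2))]

lemma hasDerivAt_mdot {u v : ℝ → Fin 3 → ℝ} {u' v' : Fin 3 → ℝ} {x : ℝ}
    (hu : HasDerivAt u u' x) (hv : HasDerivAt v v' x) :
    HasDerivAt (fun s => mdot (u s) (v s)) (mdot u' (v x) + mdot (u x) v') x := by
  have hui := hasDerivAt_pi.1 hu
  have hvi := hasDerivAt_pi.1 hv
  have h := ((((hui 0).mul (hvi 0)).neg.add ((hui 1).mul (hvi 1))).add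
    ((hui 2).mul (hvi 2)))
  refine h.congr_deriv ?_
  unfold mdot; ring

lemma hasDerivAt_mdot_const (Q : Fin 3 → ℝ) {v : ℝ → Fin 3 → ℝ} {v' : Fin 3 → ℝ} {x : ℝ}
    (hv : HasDerivAt v v' x) :
    HasDerivAt (fun s => mdot Q (v s)) (mdot Q v') x := by
  have h := hasDerivAt_mdot (hasDerivAt_const x Q) hv
  simpa [mdot] using h

noncomputable def planeEquiv (u w : ℝ × ℝ) (h : u.1 * w.2 - u.2 * w.1 ≠ 0) : (ℝ × ℝ) ≃L[ℝ] (ℝ × ℝ) :=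
  LinearEquiv.toContinuousLinearEquiv
  { toFun := fun p => (p.1 * u.1 + p.2 * w.1, p.1 * u.2 + p.2 * w.2)
    map_add' := by intro a b; simp [Prod.ext_iff]; constructor <;> ring
    map_smul' := by intro c a; simp [Prod.ext_iff, smul_eq_mul]; constructor <;> ring
    invFun := fun q => ((q.1 * w.2 - q.2 * w.1) / (u.1 * w.2 - u.2 * w.1),
                        (q.2 * u.1 - q.1 * u.2) / (u.1 * w.2 - u.2 * w.1))
    left_inv := by intro p; simp only [Prod.ext_iff]; constructor <;> (rw [div_eq_iff h]; ring)
    right_inv := by intro q; simp only [Prod.ext_iff]; constructor <;> (rw [div_mul_eq_mul_div, div_mul_eq_mul_div, ← add_div, div_eq_iff h]; ring) }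

lemma planeEquiv_apply (u w : ℝ × ℝ) (h : u.1 * w.2 - u.2 * w.1 ≠ 0) (p : ℝ × ℝ) :
    (planeEquiv u w h : (ℝ × ℝ) →L[ℝ] (ℝ × ℝ)) p
      = (p.1 * u.1 + p.2 * w.1, p.1 * u.2 + p.2 * w.2) := rfl

lemma hasFDerivAt_plane {f : ℝ → ℝ × ℝ} {d' : ℝ × ℝ} (w : ℝ × ℝ) {s t : ℝ}
    (hf : HasDerivAt f d' s) (hdet : d'.1 * w.2 - d'.2 * w.1 ≠ 0) :
    HasFDerivAt (fun p : ℝ × ℝ => f p.1 + p.2 • w)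
      ((planeEquiv d' w hdet : (ℝ × ℝ) →L[ℝ] (ℝ × ℝ))) (s, t) := by
  have h1 : HasFDerivAt (fun p : ℝ × ℝ => f p.1)
      (((1 : ℝ →L[ℝ] ℝ).smulRight d').comp (ContinuousLinearMap.fst ℝ ℝ ℝ)) (s, t) :=
    hf.hasFDerivAt.comp (s, t) hasFDerivAt_fst
  have h2 : HasFDerivAt (fun p : ℝ × ℝ => p.2 • w)
      ((ContinuousLinearMap.snd ℝ ℝ ℝ).smulRight w) (s, t) :=
    ((ContinuousLinearMap.snd ℝ ℝ ℝ).smulRight w).hasFDerivAt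
  have h3 := h1.add h2
  have heq : (((1 : ℝ →L[ℝ] ℝ).smulRight d').comp (ContinuousLinearMap.fst ℝ ℝ ℝ))
      + (ContinuousLinearMap.snd ℝ ℝ ℝ).smulRight w
      = (planeEquiv d' w hdet : (ℝ × ℝ) →L[ℝ] (ℝ × ℝ)) := by
    apply ContinuousLinearMap.ext
    intro p
    simp [planeEquiv_apply, Prod.ext_iff, smul_eq_mul]
  rw [← heq]
  exact h3

theorem regular_A_equiv {f : ℝ → ℝ × ℝ} {s₀ : ℝ} {Uo : Set ℝ} (hUo : IsOpen Uo) (hs : s₀ ∈ Uo)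
    (hf : ContDiffOn ℝ (⊤ : ℕ∞) f Uo) {d : ℝ × ℝ} (hd : HasDerivAt f d s₀) (hne : d ≠ 0) :
    CnAEquiv ⊤ f s₀ (fun t => (t, 0)) 0 := by
  have h1top : (1 : WithTop ℕ∞) ≤ ((⊤ : ℕ∞) : WithTop ℕ∞) := by exact_mod_cast le_top
  have h0top : ((⊤ : ℕ∞) : WithTop ℕ∞) ≠ 0 := by simp
  set w : ℝ × ℝ := (-d.2, d.1) with hw
  have hdiff : DifferentiableOn ℝ f Uo := hf.differentiableOn h0top
  have hderiv_cont : ContinuousOn (deriv f) Uo := hf.continuousOn_deriv_of_isOpen hUo h1top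
  have hds₀ : deriv f s₀ = d := hd.deriv
  set g : ℝ → ℝ := fun s => (deriv f s).1 * d.1 + (deriv f s).2 * d.2 with hgdef
  have hgcont : ContinuousOn g Uo :=
    ((hderiv_cont.fst.mul continuousOn_const).add (hderiv_cont.snd.mul continuousOn_const))
  have hg0 : g s₀ ≠ 0 := by
    intro h0
    apply hne
    rw [hgdef] at h0; simp only [hds₀] at h0
    have h1 : d.1 * d.1 = 0 :=
      le_antisymm (by nlinarith [mul_self_nonneg d.2]) (mul_self_nonneg d.1)
    have h2 : d.2 * d.2 = 0 :=
      le_antisymm (by nlinarith [mul_self_nonneg d.1]) (mul_self_nonneg d.2)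
    exact Prod.ext (mul_self_eq_zero.1 h1) (mul_self_eq_zero.1 h2)
  set J : Set ℝ := Uo ∩ g ⁻¹' {(0:ℝ)}ᶜ with hJdef
  have hJopen : IsOpen J := hgcont.isOpen_inter_preimage hUo isOpen_compl_singleton
  have hJUo : J ⊆ Uo := Set.inter_subset_left
  have hs₀J : s₀ ∈ J := ⟨hs, hg0⟩
  set F : ℝ × ℝ → ℝ × ℝ := fun p => f p.1 + p.2 • w with hFdef
  have hFsm : ContDiffOn ℝ (⊤ : ℕ∞) F (Uo ×ˢ (Set.univ : Set ℝ)) :=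
    (hf.comp contDiff_fst.contDiffOn fun p hp => hp.1).add
      ((contDiff_snd.smul contDiff_const).contDiffOn)
  have key : ∀ s : ℝ, s ∈ J → ∀ t : ℝ,
      ∃ A : (ℝ × ℝ) ≃L[ℝ] (ℝ × ℝ), HasFDerivAt F (A : (ℝ × ℝ) →L[ℝ] (ℝ × ℝ)) (s, t) := by
    intro s hsJ t
    have hdet : (deriv f s).1 * w.2 - (deriv f s).2 * w.1 ≠ 0 := by
      have hgs : g s ≠ 0 := hsJ.2
      intro h0
      apply hgs
      show (deriv f s).1 * d.1 + (deriv f s).2 * d.2 = 0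
      simp only [hw] at h0
      linarith
    exact ⟨planeEquiv (deriv f s) w hdet,
      hasFDerivAt_plane w ((hdiff.differentiableAt (hUo.mem_nhds (hJUo hsJ))).hasDerivAt) hdet⟩
  obtain ⟨A₀, hA₀⟩ := key s₀ hs₀J 0
  have hFc₀ : ContDiffAt ℝ (⊤ : ℕ∞) F (s₀, 0) :=
    hFsm.contDiffAt ((hUo.prod isOpen_univ).mem_nhds ⟨hs, trivial⟩)
  set e := hFc₀.toOpenPartialHomeomorph F hA₀ h0top with he_def
  have heF : ⇑e = F := ContDiffAt.toOpenPartialHomeomorph_coe hFc₀ hA₀ h0top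
  have hsrc : (s₀, (0:ℝ)) ∈ e.source := ContDiffAt.mem_toOpenPartialHomeomorph_source hFc₀ hA₀ h0top
  have htgt : F (s₀, 0) ∈ e.target :=
    ContDiffAt.image_mem_toOpenPartialHomeomorph_target hFc₀ hA₀ h0top
  have hFp₀ : F (s₀, 0) = f s₀ := by simp [hFdef]
  have hsymm₀ : e.symm (f s₀) = (s₀, 0) := by
    rw [← hFp₀, ← heF]; exact e.left_inv hsrc
  set Vs : Set (ℝ × ℝ) := e.target ∩ e.symm ⁻¹' (J ×ˢ (Set.univ : Set ℝ)) with hVsdef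
  have hVsopen : IsOpen Vs := e.isOpen_inter_preimage_symm (hJopen.prod isOpen_univ)
  have hfVs : f s₀ ∈ Vs := by
    constructor
    · rw [← hFp₀]; exact htgt
    · rw [Set.mem_preimage, hsymm₀]; exact ⟨hs₀J, trivial⟩
  set Us : Set (ℝ × ℝ) := (e.source ∩ (J ×ˢ (Set.univ : Set ℝ))) ∩ F ⁻¹' Vs with hUsdef
  have hUsopen : IsOpen Us := by
    have hcF : ContinuousOn F (e.source ∩ (J ×ˢ (Set.univ : Set ℝ))) :=
      (heF ▸ e.continuousOn).mono Set.inter_subset_left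
    exact hcF.isOpen_inter_preimage (e.open_source.inter (hJopen.prod isOpen_univ)) hVsopen
  have hp₀Us : (s₀, (0:ℝ)) ∈ Us :=
    ⟨⟨hsrc, hs₀J, trivial⟩, by rw [Set.mem_preimage, hFp₀]; exact hfVs⟩
  have hUsrc : Us ⊆ e.source := fun p hp => hp.1.1
  have hUsJ : Us ⊆ J ×ˢ (Set.univ : Set ℝ) := fun p hp => hp.1.2
  have hsymm_sm : ContDiffOn ℝ (⊤ : ℕ∞) (⇑e.symm) Vs := by
    intro y hy
    have hyt : y ∈ e.target := hy.1
    have hmem : e.symm y ∈ J ×ˢ (Set.univ : Set ℝ) := hy.2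
    obtain ⟨A, hA⟩ := key (e.symm y).1 hmem.1 (e.symm y).2
    rw [Prod.mk.eta] at hA
    have hc : ContDiffAt ℝ (⊤ : ℕ∞) F (e.symm y) :=
      hFsm.contDiffAt ((hUo.prod isOpen_univ).mem_nhds ⟨hJUo hmem.1, trivial⟩)
    rw [← heF] at hA hc
    exact (e.contDiffAt_symm hyt hA hc).contDiffWithinAt
  refine ⟨fun s => s - s₀, fun q => ((e.symm q).1 - s₀, (e.symm q).2), ?_, sub_self s₀, ?_, ?_, ?_⟩
  · exact ⟨Set.univ, Set.univ, fun t => t + s₀, isOpen_univ, trivial, isOpen_univ, trivial,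
      (contDiff_id.sub contDiff_const).contDiffOn, (contDiff_id.add contDiff_const).contDiffOn,
      fun _ _ => trivial, fun _ _ => trivial, fun y _ => by ring, fun z _ => by ring⟩
  · refine ⟨Vs, (fun q : ℝ × ℝ => (q.1 + s₀, q.2)) ⁻¹' Us, fun q => F (q.1 + s₀, q.2),
      hVsopen, hfVs, hUsopen.preimage ((continuous_fst.add continuous_const).prodMk continuous_snd),
      ?_, ?_, ?_, ?_, ?_, ?_, ?_⟩
    · simp only [Set.mem_preimage]
      rw [hsymm₀]
      simpa using hp₀Us
    · exact ((contDiff_fst.sub contDiff_const).prodMk contDiff_snd).comp_contDiffOn hsymm_sm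
    · refine (hFsm.comp ((contDiff_fst.add contDiff_const).prodMk contDiff_snd).contDiffOn ?_)
      intro q hq
      have : (q.1 + s₀, q.2) ∈ Us := hq
      exact ⟨hJUo (hUsJ this).1, trivial⟩
    · intro y hy
      rw [Set.mem_preimage]
      have h1 : ((e.symm y).1 - s₀ + s₀, (e.symm y).2) = e.symm y := by
        rw [sub_add_cancel]
      rw [h1]
      refine ⟨⟨e.map_target hy.1, hy.2⟩, ?_⟩
      rw [Set.mem_preimage, ← heF, e.right_inv hy.1]
      exact hy
    · intro q hq
      exact hq.2
    · intro y hy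
      have h1 : ((e.symm y).1 - s₀ + s₀, (e.symm y).2) = e.symm y := by rw [sub_add_cancel]
      show F ((e.symm y).1 - s₀ + s₀, (e.symm y).2) = y
      rw [h1, ← heF, e.right_inv hy.1]
    · intro q hq
      have h1 : e.symm (F (q.1 + s₀, q.2)) = (q.1 + s₀, q.2) := by
        rw [← heF]; exact e.left_inv (hUsrc hq)
      show ((e.symm (F (q.1 + s₀, q.2))).1 - s₀, (e.symm (F (q.1 + s₀, q.2))).2) = q
      rw [h1]
      simp
  · show ((e.symm (f s₀)).1 - s₀, (e.symm (f s₀)).2) = ((0:ℝ), (0:ℝ))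
    rw [hsymm₀]
    simp
  · have hcont : Continuous (fun s : ℝ => (s, (0:ℝ))) := continuous_id.prodMk continuous_const
    have hev : ∀ᶠ s in nhds s₀, (s, (0:ℝ)) ∈ Us :=
      hcont.continuousAt.preimage_mem_nhds (hUsopen.mem_nhds hp₀Us)
    filter_upwards [hev] with s hsU
    have hFs : F (s, 0) = f s := by simp [hFdef]
    have h1 : e.symm (f s) = (s, 0) := by
      rw [← hFs, ← heF]; exact e.left_inv (hUsrc hsU)
    rw [h1]

/-- if `m s₀ ≠ 0` and `Q ≠ r s₀`, the hyperbolic pedal curve germ at `s₀` is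
non-singular; equivalently, in the chart `q` it is `C^∞` `𝒜`-equivalent to `t ↦ (t, 0)`. -/
theorem pedal_germ_nonsingular
    (I : Set ℝ) (hI : IsOpen I) (r v : ℝ → Fin 3 → ℝ) (Q : Fin 3 → ℝ)
    (h : IsSLegendre I r v) (hrp : ∀ s ∈ I, r s ∈ H2plus)
    (s₀ : ℝ) (hs₀ : s₀ ∈ I) (hm : mc r v s₀ ≠ 0)
    (hQ : Q ∈ H2plus) (hQne : Q ≠ r s₀) :
    deriv (Ped Q v) s₀ ≠ 0 ∧
      CnAEquiv ⊤ (fun s => qchart (Ped Q v s)) s₀ (fun t => (t, 0)) 0 := by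
  obtain ⟨hrs, hvs, hrH, hvS, hrv, hr'v⟩ := h
  have h1top : (1 : WithTop ℕ∞) ≤ ((⊤ : ℕ∞) : WithTop ℕ∞) := by exact_mod_cast le_top
  have h0top : ((⊤ : ℕ∞) : WithTop ℕ∞) ≠ 0 := by simp
  have hvtop : ContDiffOn ℝ ((⊤ : ℕ∞) : WithTop ℕ∞) v I := hvs.of_le (by simp)
  have hrtop : ContDiffOn ℝ ((⊤ : ℕ∞) : WithTop ℕ∞) r I := hrs.of_le (by simp)
  have hvd : HasDerivAt v (deriv v s₀) s₀ :=
    ((hvtop.differentiableOn h0top).differentiableAt (hI.mem_nhds hs₀)).hasDerivAt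
  have hrd : HasDerivAt r (deriv r s₀) s₀ :=
    ((hrtop.differentiableOn h0top).differentiableAt (hI.mem_nhds hs₀)).hasDerivAt
  have hrr : mdot (r s₀) (r s₀) = -1 := hrH s₀ hs₀
  have hvv : mdot (v s₀) (v s₀) = 1 := hvS s₀ hs₀
  have hrv0 : mdot (r s₀) (v s₀) = 0 := hrv s₀ hs₀
  have hv'v : mdot (deriv v s₀) (v s₀) = 0 := by
    have hD := hasDerivAt_mdot hvd hvd
    have hE : HasDerivAt (fun s => mdot (v s) (v s)) 0 s₀ := by
      refine (hasDerivAt_const s₀ (1:ℝ)).congr_of_eventuallyEq ?_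
      filter_upwards [hI.mem_nhds hs₀] with s hs using hvS s hs
    have h1 := hD.unique hE
    have h2 := mdot_comm (deriv v s₀) (v s₀)
    linarith
  have hrv' : mdot (r s₀) (deriv v s₀) = 0 := by
    have hD := hasDerivAt_mdot hrd hvd
    have hE : HasDerivAt (fun s => mdot (r s) (v s)) 0 s₀ := by
      refine (hasDerivAt_const s₀ (0:ℝ)).congr_of_eventuallyEq ?_
      filter_upwards [hI.mem_nhds hs₀] with s hs using hrv s hs
    have h1 := hD.unique hE
    have h2 := hr'v s₀ hs₀
    linarith
  have hm' : mdot (deriv v s₀) (mcross (r s₀) (v s₀)) ≠ 0 := hm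
  have hQQ : mdot Q Q = -1 := hQ.1
  have hQ0 : 0 < Q 0 := hQ.2
  have hR0 : 0 < r s₀ 0 := (hrp s₀ hs₀).2
  have hpos : (0:ℝ) < 1 + mdot Q (v s₀) ^ 2 := by positivity
  have hSpos : 0 < Real.sqrt (1 + mdot Q (v s₀) ^ 2) := Real.sqrt_pos.2 hpos
  have hlad : HasDerivAt (fun s => mdot Q (v s)) (mdot Q (deriv v s₀)) s₀ :=
    hasDerivAt_mdot_const Q hvd
  have hsqd : HasDerivAt (fun s => Real.sqrt (1 + mdot Q (v s) ^ 2))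
      (mdot Q (v s₀) * mdot Q (deriv v s₀) / Real.sqrt (1 + mdot Q (v s₀) ^ 2)) s₀ := by
    have hin : HasDerivAt (fun s => 1 + mdot Q (v s) ^ 2)
        ((2:ℕ) * mdot Q (v s₀) ^ (2-1) * mdot Q (deriv v s₀)) s₀ := (hlad.pow 2).const_add 1
    have hsq0 := hin.sqrt hpos.ne'
    convert hsq0 using 1
    push_cast
    rw [pow_one, div_eq_div_iff hSpos.ne' (mul_ne_zero two_ne_zero hSpos.ne')]
    ring
  have hcd : HasDerivAt (fun s => (Real.sqrt (1 + mdot Q (v s) ^ 2))⁻¹)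
      (-(mdot Q (v s₀) * mdot Q (deriv v s₀)) / Real.sqrt (1 + mdot Q (v s₀) ^ 2) ^ 3) s₀ := by
    have h1 := hsqd.inv hSpos.ne'
    exact h1.congr_deriv (by ring)
  have hN : HasDerivAt (fun s => Q - mdot Q (v s) • v s)
      (-(mdot Q (deriv v s₀) • v s₀ + mdot Q (v s₀) • deriv v s₀)) s₀ := by
    have h1 := (hasDerivAt_const s₀ Q).sub (hlad.smul hvd)
    exact h1.congr_deriv (by rw [zero_sub, add_comm])
  have hPed : HasDerivAt (Ped Q v)
      ((-(mdot Q (v s₀) * mdot Q (deriv v s₀)) / Real.sqrt (1 + mdot Q (v s₀) ^ 2) ^ 3) •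
          (Q - mdot Q (v s₀) • v s₀)
        + (Real.sqrt (1 + mdot Q (v s₀) ^ 2))⁻¹ •
          -(mdot Q (deriv v s₀) • v s₀ + mdot Q (v s₀) • deriv v s₀)) s₀ := by
    have h2 := hcd.smul hN
    exact h2.congr_deriv (add_comm _ _)
  obtain ⟨hP'ne, hP12ne⟩ := aux_main (r s₀) (v s₀) (deriv v s₀) Q _
    hrr hvv hrv0 hv'v hrv' hm' hQQ hQ0 hR0 hQne rfl
  constructor
  · rw [hPed.deriv]; exact hP'ne
  · have hpi := hasDerivAt_pi.1 hPed
    have hfd : HasDerivAt (fun s => qchart (Ped Q v s))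
        (((-(mdot Q (v s₀) * mdot Q (deriv v s₀)) / Real.sqrt (1 + mdot Q (v s₀) ^ 2) ^ 3) •
          (Q - mdot Q (v s₀) • v s₀)
        + (Real.sqrt (1 + mdot Q (v s₀) ^ 2))⁻¹ •
          -(mdot Q (deriv v s₀) • v s₀ + mdot Q (v s₀) • deriv v s₀)) 1,
        ((-(mdot Q (v s₀) * mdot Q (deriv v s₀)) / Real.sqrt (1 + mdot Q (v s₀) ^ 2) ^ 3) •
          (Q - mdot Q (v s₀) • v s₀)
        + (Real.sqrt (1 + mdot Q (v s₀) ^ 2))⁻¹ •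
          -(mdot Q (deriv v s₀) • v s₀ + mdot Q (v s₀) • deriv v s₀)) 2) s₀ :=
      (hpi 1).prodMk (hpi 2)
    have hvi : ∀ i, ContDiffOn ℝ ((⊤ : ℕ∞) : WithTop ℕ∞) (fun s => v s i) I := fun i =>
      (ContinuousLinearMap.proj (R := ℝ) (φ := fun _ : Fin 3 => ℝ) i).contDiff.comp_contDiffOn
        hvtop
    have hlasm : ContDiffOn ℝ ((⊤ : ℕ∞) : WithTop ℕ∞) (fun s => mdot Q (v s)) I := by
      show ContDiffOn ℝ ((⊤ : ℕ∞) : WithTop ℕ∞)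
        (fun s => -(Q 0 * v s 0) + Q 1 * v s 1 + Q 2 * v s 2) I
      exact ((contDiffOn_const.mul (hvi 0)).neg.add (contDiffOn_const.mul (hvi 1))).add
        (contDiffOn_const.mul (hvi 2))
    have hcsm : ContDiffOn ℝ ((⊤ : ℕ∞) : WithTop ℕ∞)
        (fun s => (Real.sqrt (1 + mdot Q (v s) ^ 2))⁻¹) I := by
      intro s hs
      have hps : (0:ℝ) < 1 + mdot Q (v s) ^ 2 := by positivity
      have h1 : ContDiffWithinAt ℝ ((⊤ : ℕ∞) : WithTop ℕ∞)
          (fun s => 1 + mdot Q (v s) ^ 2) I s := (contDiffOn_const.add (hlasm.pow 2)) s hs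
      have h2 := (Real.contDiffAt_sqrt hps.ne').comp_contDiffWithinAt s h1
      exact h2.inv (Real.sqrt_pos.2 hps).ne'
    have hcomp1 : ContDiffOn ℝ ((⊤ : ℕ∞) : WithTop ℕ∞)
        (fun s => (Real.sqrt (1 + mdot Q (v s) ^ 2))⁻¹ * (Q 1 - mdot Q (v s) * v s 1)) I :=
      hcsm.mul (contDiffOn_const.sub (hlasm.mul (hvi 1)))
    have hcomp2 : ContDiffOn ℝ ((⊤ : ℕ∞) : WithTop ℕ∞)
        (fun s => (Real.sqrt (1 + mdot Q (v s) ^ 2))⁻¹ * (Q 2 - mdot Q (v s) * v s 2)) I :=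
      hcsm.mul (contDiffOn_const.sub (hlasm.mul (hvi 2)))
    have hfsm : ContDiffOn ℝ ((⊤ : ℕ∞) : WithTop ℕ∞) (fun s => qchart (Ped Q v s)) I :=
      hcomp1.prodMk hcomp2
    exact regular_A_equiv hI hs₀ hfsm hfd hP12ne
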